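/- Let B_1 and B_2 be two plane binary trees, each with n leaves, having c_1 and c_2 cherries respectively, and let k be a fixed nonnegative integer. Then the number of perfect matchings (bijections) between the leaf set of B_1 and the leaf set of B_2 under which exactly k cherries of B_1 are matched to cherries of B_2 (both leaves of the cherry of B_1 going to the two leaves of a single cherry of B_2) equals binom(c_1, k)·binom(c_2, k)·k!·2^k·Σ_{ℓ≥0} (−1)^ℓ binom(c_1−k, ℓ) binom(c_2−k, ℓ)·ℓ!·2^ℓ·(n−2k−2ℓ)!. -/

import Mathlib

open scoped Classical

inductive PTree : Type
  | leaf : PTree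
  | node : PTree → PTree → PTree
deriving DecidableEq

namespace PTree

def size : PTree → ℕ
  | leaf => 1
  | node l r => size l + size r

def cherries : PTree → ℕ
  | leaf => 0
  | node leaf leaf => 1
  | node l r => cherries l + cherries r

def height : PTree → ℕ
  | leaf => 0
  | node l r => max (height l) (height r) + 1

def encode : PTree → ℕ
  | leaf => 0
  | node l r => Nat.pair (encode l) (encode r) + 1

def normalize : PTree → PTree
  | leaf => leaf
  | node l r =>
      let l' := normalize l
      let r' := normalize r
      if encode l' ≤ encode r' then node l' r' else node r' l'

def isoFuns : PTree → PTree → List (ℕ → ℕ)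
  | leaf, leaf => [fun i => i]
  | node l r, node l' r' =>
      ((isoFuns l l').flatMap fun g => (isoFuns r r').map fun h =>
        fun i => if i < l.size then g i else h (i - l.size) + l'.size)
      ++
      ((isoFuns l r').flatMap fun g => (isoFuns r l').map fun h =>
        fun i => if i < l.size then g i + l'.size else h (i - l.size))
  | _, _ => []

def planeTrees : ℕ → Finset PTree
  | 0 => ∅
  | 1 => {leaf}
  | n + 2 =>
      (Finset.range (n + 1)).attach.biUnion fun k =>
        ((planeTrees (k.1 + 1)) ×ˢ (planeTrees (n + 1 - k.1))).image
          fun p => node p.1 p.2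
  termination_by n => n
  decreasing_by
  · have := Finset.mem_range.mp k.2; omega
  · omega

def binTrees (n : ℕ) : Finset PTree := (planeTrees n).image normalize

/-- Triples (T, v, S): left plane tree, right plane tree, and a matching `v`
(a permutation of `0, …, n-1`, encoded as the list of its values) matching
leaf `i` of `T` with leaf `v i` of `S`. -/
def Triples (n : ℕ) : Finset (PTree × PTree × List ℕ) :=
  (planeTrees n) ×ˢ ((planeTrees n) ×ˢ (List.range n).permutations.toFinset)

/-- Two triples represent the same tanglegram iff there are isomorphisms of the left
trees and of the right trees compatible with the matchings. -/
def equivTriple (n : ℕ) (t t' : PTree × PTree × List ℕ) : Bool :=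
  (isoFuns t.1 t'.1).any fun φ => (isoFuns t.2.1 t'.2.1).any fun ψ =>
    (List.range n).all fun i => t'.2.2.getD (φ i) 0 == ψ (t.2.2.getD i 0)

/-- The tanglegrams of size `n`: equivalence classes of triples. -/
def tangleClasses (n : ℕ) : Finset (Finset (PTree × PTree × List ℕ)) :=
  (Triples n).image fun t => (Triples n).filter (fun t' => equivTriple n t t' = true)

/-- The number of tanglegrams of size `n`. -/
def numTanglegrams (n : ℕ) : ℕ := (tangleClasses n).card

/-- The probability that a uniformly random tanglegram of size `n` satisfies the
(isomorphism-invariant) property `P` of triples. -/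
noncomputable def tangleProb (n : ℕ) (P : PTree × PTree × List ℕ → Prop) : ℝ :=
  ((tangleClasses n).filter fun c => ∃ t ∈ c, P t).card / numTanglegrams n

/-- The expectation of the statistic `f` of a uniformly random tanglegram of size `n`. -/
noncomputable def tangleExp (n : ℕ) (f : PTree × PTree × List ℕ → ℕ) : ℝ :=
  ∑' k : ℕ, (k : ℝ) * tangleProb n (fun t => f t = k)

end PTree

namespace PTree

/-- The distribution on pairs of binary trees (canonical representatives) induced by
the two halves of a uniformly random tanglegram of size `n`:
probability that the pair of isomorphism classes of the two trees lies in `S`. -/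
noncomputable def nuT (n : ℕ) (S : Finset (PTree × PTree)) : ℝ :=
  tangleProb n fun t => (normalize t.1, normalize t.2.1) ∈ S

/-- The distribution on pairs of binary trees induced by two independent uniformly
random plane binary trees with `n` leaves. -/
noncomputable def nuP (n : ℕ) (S : Finset (PTree × PTree)) : ℝ :=
  (((planeTrees n) ×ˢ (planeTrees n)).filter
      fun p => (normalize p.1, normalize p.2) ∈ S).card / ((planeTrees n).card ^ 2 : ℝ)

/-- The total variation distance between `nuT` and `nuP`. -/
noncomputable def tvDist (n : ℕ) : ℝ :=
  ((binTrees n ×ˢ binTrees n).powerset).sup' (Finset.powerset_nonempty _)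
    fun S => |nuT n S - nuP n S|

/-- The number of occurrences of (trees isomorphic to) `B` as a fringe subtree of `T`. -/
def occ (B : PTree) : PTree → ℕ
  | leaf => if normalize leaf = normalize B then 1 else 0
  | node l r => (if normalize (node l r) = normalize B then 1 else 0) + occ B l + occ B r

/-- The number of generators of the automorphism group of `T`: the number of internal
vertices whose two branches are isomorphic. -/
def gens : PTree → ℕ
  | leaf => 0
  | node l r => (if normalize l = normalize r then 1 else 0) + gens l + gens r

/-- `T` has a root branch isomorphic to `B`. -/
def hasBranch (B : PTree) : PTree → Prop
  | leaf => False
  | node l r => normalize l = normalize B ∨ normalize r = normalize B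

/-- The cherries of a plane binary tree whose leaves are numbered from `k` on
(left to right), as pairs of leaf positions. -/
def cherryList : PTree → ℕ → List (ℕ × ℕ)
  | leaf, _ => []
  | node leaf leaf, k => [(k, k + 1)]
  | node l r, k => cherryList l k ++ cherryList r (k + l.size)

/-- The number of matched cherries: cherries of `T` whose two leaves are matched by `L`
to the two leaves of a cherry of `S`. -/
def matchedCherries (T S : PTree) (L : List ℕ) : ℕ :=
  (cherryList T 0).countP fun p =>
    (cherryList S 0).any fun q =>
      (L.getD p.1 0 == q.1 && L.getD p.2 0 == q.2) ||
      (L.getD p.1 0 == q.2 && L.getD p.2 0 == q.1)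

/-- The number of automorphisms of the tanglegram represented by the triple `(T, L, S)`:
pairs of automorphisms of the two trees compatible with the matching `L`. -/
def tangleAutCount (T S : PTree) (L : List ℕ) : ℕ :=
  ((isoFuns T T).map fun a =>
    (isoFuns S S).countP fun b =>
      (List.range T.size).all fun i => L.getD (a i) 0 == b (L.getD i 0)).sum

/-- The number of automorphisms of `T` whose cycle type is `μ(s) = 2^s 1^(n-2s)`,
i.e. involutions of the leaves moving exactly `2 s` leaves. -/
def autMuCount (T : PTree) (s : ℕ) : ℕ :=
  (isoFuns T T).countP fun f =>
    ((List.range T.size).all fun i => f (f i) == i) &&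
    ((List.range T.size).countP fun i => !(f i == i)) == 2 * s

end PTree


/-!
Index the cherries of each tree and view them as an injective map `ι × Fin 2 → Fin n`. For a
set `S` of `j` cherries of `B₁`, a permutation maps every cherry of `S` onto a cherry of `B₂`
exactly when it is obtained by choosing an injection of `S` into the cherries of `B₂`, an
orientation of each of the `j` image pairs, and an arbitrary bijection between the remaining
`n - 2j` leaves; hence there are `(c₂)_j 2^j (n - 2j)!` of them. Summing over `S` computes
`∑_σ binom(m(σ), j)`, where `m(σ)` is the number of matched cherries, and the number of `σ` with
`m(σ) = k` is extracted by `∑_j (-1)^(j-k) binom(j, k) binom(m, j) = [m = k]`.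
-/

open Finset Function Equiv
open scoped Nat

theorem Equiv.Perm.card_comp_eq {α ι : Type*} [Fintype α] [DecidableEq α] [Fintype ι]
    {f g : ι → α} (hf : Injective f) (hg : Injective g) :
    #{σ : Perm α | ⇑σ ∘ f = g} = (Fintype.card α - Fintype.card ι)! := by
  obtain ⟨σ₀, hσ₀⟩ := Perm.exists_extending_pair f g hf hg
  have hcoset : #{σ : Perm α | ⇑σ ∘ f = g} = #{τ : Perm α | ⇑τ ∘ f = f} := by
    apply card_nbij' (σ₀⁻¹ * ·) (σ₀ * ·)
    · intro σ hσ
      simp only [coe_filter, mem_univ, true_and, Set.mem_ofPred_eq, funext_iff, comp_apply,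
        Perm.mul_apply] at hσ ⊢
      intro x
      rw [hσ, Perm.inv_eq_iff_eq, hσ₀]
    · intro τ hτ
      simp only [coe_filter, mem_univ, true_and, Set.mem_ofPred_eq, funext_iff, comp_apply,
        Perm.mul_apply] at hτ ⊢
      intro x
      rw [hτ, hσ₀]
    · intro σ _; simp
    · intro τ _; simp
  let p : α → Prop := (· ∉ Set.range f)
  have hstab : #{τ : Perm α | ⇑τ ∘ f = f}
      = Fintype.card {τ : Perm α // ∀ a, ¬ p a → τ a = a} := by
    rw [← Fintype.card_subtype]
    refine Fintype.card_congr (Equiv.subtypeEquivRight fun τ => ?_)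
    simp [p, funext_iff]
  rw [hcoset, hstab, ← Fintype.card_congr (Perm.subtypeEquivSubtypePerm p), Fintype.card_perm,
    Fintype.card_subtype_compl, Set.card_range_of_injective hf]

section InclusionExclusion

theorem sum_choose_card_filter {X Y : Type*} (s : Finset X) (T : Finset Y) (P : X → Y → Prop)
    (j : ℕ) :
    ∑ x ∈ s, (#{y ∈ T | P x y}).choose j
      = ∑ S ∈ T.powersetCard j, #{x ∈ s | ∀ y ∈ S, P x y} := by
  have h := sum_card_bipartiteAbove_eq_sum_card_bipartiteBelow (s := s) (t := T.powersetCard j)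
    (fun x S => ∀ y ∈ S, P x y)
  simp only [bipartiteAbove, bipartiteBelow] at h
  rw [← h]
  refine sum_congr rfl fun x _ => ?_
  rw [← card_powersetCard]
  congr 1
  ext S
  simp only [mem_powersetCard, mem_filter, subset_iff]
  grind

theorem alternating_sum_range_choose_of_lt {a N : ℕ} (h : a < N) :
    ∑ l ∈ range N, (-1 : ℤ) ^ l * a.choose l = if a = 0 then 1 else 0 := by
  obtain ⟨d, rfl⟩ := Nat.exists_eq_add_of_lt h
  rw [show a + d + 1 = (a + 1) + d by ring, sum_range_add, Int.alternating_sum_range_choose,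
    add_eq_left]
  exact sum_eq_zero fun l _ => by simp [Nat.choose_eq_zero_of_lt (by omega : a < a + 1 + l)]

theorem sum_range_neg_one_pow_mul_choose_mul_choose {m k N : ℕ} (h : m < k + N) :
    ∑ j ∈ range (k + N), (-1 : ℤ) ^ (j - k) * j.choose k * m.choose j
      = if m = k then 1 else 0 := by
  have hterm (l : ℕ) : (-1 : ℤ) ^ (k + l - k) * (k + l).choose k * m.choose (k + l)
      = m.choose k * ((-1) ^ l * (m - k).choose l) := by
    rw [Nat.add_sub_cancel_left, mul_assoc, mul_comm ((k + l).choose k : ℤ), ← Nat.cast_mul,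
      Nat.choose_mul (Nat.le_add_right k l), Nat.add_sub_cancel_left]
    push_cast; ring
  rw [sum_range_add,
    sum_eq_zero fun j hj => by simp [Nat.choose_eq_zero_of_lt (mem_range.mp hj)], zero_add,
    sum_congr rfl fun l _ => hterm l, ← mul_sum]
  rcases lt_or_ge m k with hmk | hkm
  · simp [Nat.choose_eq_zero_of_lt hmk, hmk.ne]
  · rw [alternating_sum_range_choose_of_lt (by omega)]
    obtain rfl | hmk := eq_or_ne m k
    · simp
    · simp [hmk, show m - k ≠ 0 by omega]

/-- The exponent `j - k` truncates harmlessly: `j.choose k = 0` for `j < k`. -/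
theorem card_filter_eq_sum_range_choose {X : Type*} (s : Finset X) (M : X → ℕ) {k N : ℕ}
    (hM : ∀ x ∈ s, M x < k + N) :
    (#{x ∈ s | M x = k} : ℤ)
      = ∑ j ∈ range (k + N), (-1) ^ (j - k) * j.choose k * ∑ x ∈ s, ((M x).choose j : ℤ) := by
  simp_rw [mul_sum]
  rw [sum_comm, card_filter, Nat.cast_sum]
  refine sum_congr rfl fun x hx => ?_
  rw [sum_range_neg_one_pow_mul_choose_mul_choose (hM x hx)]
  push_cast; rfl

theorem sum_range_neg_one_pow_mul_choose_mul_descFactorial (a b k N : ℕ) (g : ℕ → ℤ) :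
    ∑ j ∈ range (k + N),
        (-1 : ℤ) ^ (j - k) * j.choose k * (a.choose j * (b.descFactorial j * g j))
      = a.choose k * b.choose k * k ! *
          ∑ l ∈ range N, (-1) ^ l * (a - k).choose l * (b - k).choose l * l ! * g (k + l) := by
  rw [sum_range_add,
    sum_eq_zero fun j hj => by simp [Nat.choose_eq_zero_of_lt (mem_range.mp hj)], zero_add,
    mul_sum]
  refine sum_congr rfl fun l _ => ?_
  have ha : (a.choose (k + l) * (k + l).choose k : ℤ) = a.choose k * (a - k).choose l := by
    rw [← Nat.cast_mul, Nat.choose_mul (Nat.le_add_right k l), Nat.add_sub_cancel_left,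
      Nat.cast_mul]
  have hb : (b.descFactorial (k + l) : ℤ) = b.choose k * k ! * (b - k).choose l * l ! := by
    rw [← Nat.descFactorial_mul_descFactorial (Nat.le_add_right k l), Nat.add_sub_cancel_left,
      Nat.descFactorial_eq_factorial_mul_choose, Nat.descFactorial_eq_factorial_mul_choose]
    push_cast
    ring
  rw [Nat.add_sub_cancel_left, hb]
  linear_combination ((-1 : ℤ) ^ l * b.choose k * k ! * (b - k).choose l * l ! * g (k + l)) * ha

end InclusionExclusion

section Blocks

variable {α ι κ β : Type*}

/-- A family of pairwise disjoint blocks of size `|β|` in `α` is encoded as an injective map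
`ι × β → α`. -/
def IsMatchedBlock (c : ι × β → α) (d : κ × β → α) (σ : Perm α) (i : ι) : Prop :=
  ∃ j, ∃ τ : Perm β, ∀ t, σ (c (i, t)) = d (j, τ t)

theorem forall_isMatchedBlock_iff [Nonempty β] {c : ι × β → α} {d : κ × β → α}
    (hc : Injective c) (S : Finset ι) (σ : Perm α) :
    (∀ i ∈ S, IsMatchedBlock c d σ i) ↔
      ∃ uτ : (S ↪ κ) × (S → Perm β),
        ∀ x : S × β, σ (c (x.1, x.2)) = d (uτ.1 x.1, uτ.2 x.1 x.2) := by
  constructor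
  · intro h
    choose u τ hστ using fun i : S => h i i.2
    -- two blocks of `S` sent onto the same block of `d` share the image of a point
    have hu : Injective u := by
      intro i i' hii'
      obtain ⟨t⟩ := ‹Nonempty β›
      have := hστ i' ((τ i').symm (τ i t))
      rw [Equiv.apply_symm_apply, ← hii', ← hστ i t] at this
      exact Subtype.ext (congrArg Prod.fst (hc (σ.injective this))).symm
    exact ⟨(⟨u, hu⟩, τ), fun x => hστ x.1 x.2⟩
  · rintro ⟨uτ, h⟩ i hi
    exact ⟨uτ.1 ⟨i, hi⟩, uτ.2 ⟨i, hi⟩, fun t => h (⟨i, hi⟩, t)⟩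

variable [Fintype α] [DecidableEq α] [Fintype β]

theorem card_forall_isMatchedBlock [Fintype κ] [Nonempty β] {c : ι × β → α} {d : κ × β → α}
    (hc : Injective c) (hd : Injective d) (S : Finset ι) :
    #{σ : Perm α | ∀ i ∈ S, IsMatchedBlock c d σ i}
      = (Fintype.card κ).descFactorial #S * (Fintype.card β)! ^ #S
          * (Fintype.card α - #S * Fintype.card β)! := by
  let cS : S × β → α := c ∘ Prod.map Subtype.val id
  let pattern : (S ↪ κ) × (S → Perm β) → S × β → α :=
    fun uτ x => d (uτ.1 x.1, uτ.2 x.1 x.2)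
  have hpattern_inj (uτ) : Injective (pattern uτ) := by
    rintro ⟨i, t⟩ ⟨i', t'⟩ h
    obtain ⟨h₁, h₂⟩ := Prod.mk.injEq _ _ _ _ ▸ hd h
    obtain rfl : i = i' := uτ.1.injective h₁
    exact congrArg _ ((uτ.2 i).injective h₂)
  have hpattern : Injective pattern := by
    rintro ⟨u, τ⟩ ⟨u', τ'⟩ h
    obtain ⟨t⟩ := ‹Nonempty β›
    have key (i : S) (t : β) : u i = u' i ∧ τ i t = τ' i t := by
      simpa using hd (congrFun h (i, t))
    exact Prod.ext (DFunLike.ext _ _ fun i => (key i t).1)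
      (funext fun i => Equiv.ext fun t => (key i t).2)
  have hunion : ({σ : Perm α | ∀ i ∈ S, IsMatchedBlock c d σ i} : Finset (Perm α))
      = univ.biUnion fun uτ => {σ : Perm α | ⇑σ ∘ cS = pattern uτ} := by
    ext σ
    simp only [mem_filter, mem_univ, true_and, mem_biUnion, forall_isMatchedBlock_iff hc,
      funext_iff]
    rfl
  have hdisj : ((univ : Finset ((S ↪ κ) × (S → Perm β))) :
      Set ((S ↪ κ) × (S → Perm β))).PairwiseDisjoint
        fun uτ => ({σ : Perm α | ⇑σ ∘ cS = pattern uτ} : Finset (Perm α)) := by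
    intro uτ _ uτ' _ hne
    refine disjoint_left.mpr fun σ h h' => hne (hpattern ?_)
    simp only [mem_filter, mem_univ, true_and] at h h'
    rw [← h, ← h']
  have hcS : Injective cS := hc.comp (Subtype.val_injective.prodMap injective_id)
  rw [hunion, card_biUnion hdisj,
    sum_congr rfl fun uτ _ => Perm.card_comp_eq hcS (hpattern_inj uτ), sum_const, card_univ,
    Fintype.card_prod, Fintype.card_embedding_eq, Fintype.card_pi, Fintype.card_prod,
    Fintype.card_perm, prod_const, Fintype.card_coe, card_univ, Fintype.card_coe]
  simp [smul_eq_mul]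

theorem sum_choose_card_isMatchedBlock [Fintype ι] [Fintype κ] [Nonempty β]
    {c : ι × β → α} {d : κ × β → α} (hc : Injective c) (hd : Injective d) (j : ℕ) :
    ∑ σ : Perm α, (#{i | IsMatchedBlock c d σ i}).choose j
      = (Fintype.card ι).choose j * ((Fintype.card κ).descFactorial j
          * ((Fintype.card β)! ^ j * (Fintype.card α - j * Fintype.card β)!)) := by
  rw [sum_choose_card_filter, sum_congr rfl fun S hS => ?_, sum_const, card_powersetCard,
    card_univ, smul_eq_mul]
  rw [card_forall_isMatchedBlock hc hd, (mem_powersetCard.mp hS).2, mul_assoc]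

theorem card_filter_card_isMatchedBlock_eq [Fintype ι] [Fintype κ] [Nonempty β]
    {c : ι × β → α} {d : κ × β → α} (hc : Injective c) (hd : Injective d) {N : ℕ}
    (hN : Fintype.card ι ≤ N) (k : ℕ) :
    (#{σ : Perm α | #{i | IsMatchedBlock c d σ i} = k} : ℤ)
      = (Fintype.card ι).choose k * (Fintype.card κ).choose k * k ! *
          ∑ l ∈ range (N + 1), (-1 : ℤ) ^ l * (Fintype.card ι - k).choose l
            * (Fintype.card κ - k).choose l * l !
            * ((Fintype.card β)! ^ (k + l)
              * (Fintype.card α - (k + l) * Fintype.card β)!) := by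
  rw [card_filter_eq_sum_range_choose (N := N + 1) _ _ fun σ _ =>
    (card_le_univ _).trans_lt (by omega)]
  simp_rw [← Nat.cast_sum, sum_choose_card_isMatchedBlock hc hd]
  push_cast
  exact sum_range_neg_one_pow_mul_choose_mul_descFactorial _ _ _ _ _

end Blocks

theorem exists_perm_fin_two_iff {X : Type*} (f g : Fin 2 → X) :
    (∃ τ : Perm (Fin 2), ∀ t, f t = g (τ t))
      ↔ (f 0 = g 0 ∧ f 1 = g 1) ∨ (f 0 = g 1 ∧ f 1 = g 0) := by
  constructor
  · rintro ⟨τ, h⟩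
    have hτ : ∀ τ : Perm (Fin 2), τ = 1 ∨ τ = swap 0 1 := by decide
    rcases hτ τ with rfl | rfl
    · exact Or.inl ⟨h 0, h 1⟩
    · exact Or.inr ⟨h 0, h 1⟩
  · rintro (⟨h₀, h₁⟩ | ⟨h₀, h₁⟩)
    · exact ⟨1, Fin.forall_fin_two.2 ⟨h₀, h₁⟩⟩
    · exact ⟨swap 0 1, Fin.forall_fin_two.2 ⟨by simpa using h₀, by simpa using h₁⟩⟩

theorem List.countP_eq_card_filter_getElem {X : Type*} (l : List X) (p : X → Bool) :
    l.countP p = #{i : Fin l.length | p l[i]} := by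
  conv_lhs => rw [← List.map_getElem_finRange l]
  rw [List.countP_map, Fin.univ_def, List.countP_eq_length_filter]
  simp [Finset.card_def]
  rfl

def permList {n : ℕ} (σ : Perm (Fin n)) : List ℕ := List.ofFn fun i => (σ i : ℕ)

theorem getD_permList {n : ℕ} (σ : Perm (Fin n)) (i : Fin n) :
    (permList σ).getD i 0 = σ i := by
  simp [permList]

theorem permList_injective (n : ℕ) : Injective (permList (n := n)) := by
  intro σ τ h
  exact Equiv.ext fun i => Fin.ext (congrFun (List.ofFn_injective h) i)

theorem image_permList_univ (n : ℕ) :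
    (univ : Finset (Perm (Fin n))).image permList = (List.range n).permutations.toFinset := by
  apply eq_of_subset_of_card_le
  · intro L hL
    obtain ⟨σ, -, rfl⟩ := mem_image.mp hL
    have hnodup : (permList σ).Nodup :=
      List.nodup_ofFn.mpr (Fin.val_injective.comp σ.injective)
    rw [List.mem_toFinset, List.mem_permutations,
      List.perm_ext_iff_of_nodup hnodup List.nodup_range]
    intro a
    simp only [permList, List.mem_ofFn, List.mem_range]
    exact ⟨fun ⟨i, hi⟩ => hi ▸ (σ i).isLt, fun ha => ⟨σ.symm ⟨a, ha⟩, by simp⟩⟩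
  · rw [card_image_of_injective _ (permList_injective n), card_univ, Fintype.card_perm,
      Fintype.card_fin, List.toFinset_card_of_nodup (List.nodup_permutations _ List.nodup_range),
      List.length_permutations, List.length_range]

namespace PTree

theorem length_cherryList (T : PTree) (m : ℕ) : (cherryList T m).length = T.cherries := by
  induction T, m using cherryList.induct with
  | case1 | case2 => rfl
  | case3 l r m h ihl ihr =>
    rw [cherryList.eq_3 _ _ _ h, cherries.eq_3 _ _ h, List.length_append, ihl, ihr]

theorem bounds_of_mem_cherryList {T : PTree} {m : ℕ} {p : ℕ × ℕ} (hp : p ∈ cherryList T m) :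
    p.2 = p.1 + 1 ∧ m ≤ p.1 ∧ p.2 < m + T.size := by
  induction T, m using cherryList.induct with
  | case1 => simp [cherryList] at hp
  | case2 => simp_all [cherryList, size]
  | case3 l r m h ihl ihr =>
    rw [cherryList.eq_3 _ _ _ h, List.mem_append] at hp
    rcases hp with hp | hp
    · have := ihl hp; simp only [size]; omega
    · have := ihr hp; simp only [size]; omega

theorem pairwise_cherryList (T : PTree) (m : ℕ) :
    (cherryList T m).Pairwise fun p q => p.2 < q.1 := by
  induction T, m using cherryList.induct with
  | case1 | case2 => simp [cherryList]
  | case3 l r m h ihl ihr =>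
    rw [cherryList.eq_3 _ _ _ h, List.pairwise_append]
    refine ⟨ihl, ihr, fun p hp q hq => ?_⟩
    have := bounds_of_mem_cherryList hp
    have := bounds_of_mem_cherryList hq
    omega

theorem getElem_cherryList_snd (T : PTree) (m : ℕ) (i : Fin (cherryList T m).length) :
    (cherryList T m)[i].2 = (cherryList T m)[i].1 + 1 :=
  (bounds_of_mem_cherryList (List.getElem_mem i.2)).1

theorem getElem_cherryList_snd_lt (T : PTree) (m : ℕ) (i : Fin (cherryList T m).length) :
    (cherryList T m)[i].2 < m + T.size :=
  (bounds_of_mem_cherryList (List.getElem_mem i.2)).2.2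

def cherryBlocks (B : PTree) {n : ℕ} (hB : B.size ≤ n) :
    Fin (cherryList B 0).length × Fin 2 → Fin n := fun x =>
  ⟨(cherryList B 0)[x.1].1 + x.2, by
    have := getElem_cherryList_snd B 0 x.1
    have := getElem_cherryList_snd_lt B 0 x.1
    omega⟩

theorem val_cherryBlocks_zero (B : PTree) {n : ℕ} (hB : B.size ≤ n)
    (i : Fin (cherryList B 0).length) :
    (cherryBlocks B hB (i, 0) : ℕ) = (cherryList B 0)[i].1 := rfl

theorem val_cherryBlocks_one (B : PTree) {n : ℕ} (hB : B.size ≤ n)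
    (i : Fin (cherryList B 0).length) :
    (cherryBlocks B hB (i, 1) : ℕ) = (cherryList B 0)[i].2 :=
  (getElem_cherryList_snd B 0 i).symm

theorem cherryBlocks_injective (B : PTree) {n : ℕ} (hB : B.size ≤ n) :
    Injective (cherryBlocks B hB) := by
  rintro ⟨i, t⟩ ⟨i', t'⟩ h
  replace h : (cherryList B 0)[i].1 + t = (cherryList B 0)[i'].1 + t' := congrArg Fin.val h
  have hsep {i i' : Fin (cherryList B 0).length} (hlt : i < i') :
      (cherryList B 0)[i].2 < (cherryList B 0)[i'].1 :=
    List.pairwise_iff_getElem.mp (pairwise_cherryList B 0) i i' _ _ hlt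
  have := t.isLt; have := t'.isLt
  rcases lt_trichotomy i i' with hlt | rfl | hgt
  · have := hsep hlt; have := getElem_cherryList_snd B 0 i; omega
  · simp only [Prod.mk.injEq, true_and, Fin.ext_iff]; omega
  · have := hsep hgt; have := getElem_cherryList_snd B 0 i'; omega

theorem matchedCherries_permList {n : ℕ} {B₁ B₂ : PTree} (hB₁ : B₁.size ≤ n)
    (hB₂ : B₂.size ≤ n) (σ : Perm (Fin n)) :
    matchedCherries B₁ B₂ (permList σ)
      = #{i | IsMatchedBlock (cherryBlocks B₁ hB₁) (cherryBlocks B₂ hB₂) σ i} := by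
  rw [matchedCherries, List.countP_eq_card_filter_getElem]
  refine congrArg card (filter_congr fun i _ => ?_)
  simp only [IsMatchedBlock, List.any_eq_true, List.mem_iff_get, exists_exists_eq_and,
    List.get_eq_getElem]
  refine exists_congr fun j => ?_
  rw [exists_perm_fin_two_iff (fun t => σ (cherryBlocks B₁ hB₁ (i, t)))
    (fun t => cherryBlocks B₂ hB₂ (j, t))]
  simp only [Fin.ext_iff, ← getD_permList, val_cherryBlocks_zero, val_cherryBlocks_one,
    Bool.or_eq_true, Bool.and_eq_true, beq_iff_eq]
  rfl

end PTree

open PTree in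
/-- The inclusion–exclusion count: the number of perfect matchings between the leaves of
two plane binary trees `B₁, B₂` with `n` leaves and `c₁, c₂` cherries under which exactly
`k` cherries are matched equals
`binom(c₁,k) binom(c₂,k) k! 2^k ∑_ℓ (-1)^ℓ binom(c₁-k,ℓ) binom(c₂-k,ℓ) ℓ! 2^ℓ (n-2k-2ℓ)!`. -/
theorem count_matchings_with_matched_cherries (n k : ℕ) (B₁ B₂ : PTree)
    (h1 : B₁.size = n) (h2 : B₂.size = n) :
    ((((List.range n).permutations.toFinset).filter
        (fun L => matchedCherries B₁ B₂ L = k)).card : ℤ)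
      = (Nat.choose B₁.cherries k : ℤ) * (Nat.choose B₂.cherries k : ℤ)
          * (Nat.factorial k : ℤ) * 2 ^ k *
        ∑ l ∈ Finset.range (n + 1),
          (-1 : ℤ) ^ l * (Nat.choose (B₁.cherries - k) l : ℤ)
            * (Nat.choose (B₂.cherries - k) l : ℤ)
            * (Nat.factorial l : ℤ) * 2 ^ l * (Nat.factorial (n - 2 * k - 2 * l) : ℤ) := by
  have hc₁ : B₁.cherries * 2 ≤ n := by
    simpa [length_cherryList] using
      Fintype.card_le_of_injective _ (cherryBlocks_injective B₁ h1.le)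
  rw [← image_permList_univ, filter_image, card_image_of_injective _ (permList_injective n)]
  simp_rw [matchedCherries_permList h1.le h2.le]
  have hN : Fintype.card (Fin (cherryList B₁ 0).length) ≤ n := by
    rw [Fintype.card_fin, length_cherryList]; omega
  rw [card_filter_card_isMatchedBlock_eq (cherryBlocks_injective B₁ h1.le)
    (cherryBlocks_injective B₂ h2.le) hN]
  simp only [Fintype.card_fin, length_cherryList, Nat.factorial_two, mul_sum]
  refine sum_congr rfl fun l _ => ?_
  rw [show n - (k + l) * 2 = n - 2 * k - 2 * l by omega]
  push_cast
  ring
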